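/- arXiv:1905.10013 — 6 statements merged into one kernel-verified Lean document; each statement's English description precedes it below -/
import Mathlib

section
/- Let Σ ∈ ℝ^{p×p} be symmetric positive definite, partitioned into m diagonal blocks Σ_{G_i,G_i} by a partition G_1,...,G_m of {1,...,p}. Let D = diag(Σ_{G_1G_1}^{-1/2},...,Σ_{G_mG_m}^{-1/2}) and η = min(2λ_min(DΣD), 1). Then the block-diagonal matrix S with blocks S_i = η·Σ_{G_i,G_i} satisfies S ⪯ 2Σ, i.e., 2Σ − S is positive semidefinite. -/
/-!
Since `D Σ_B D = 1`, conjugating by `D` turns `2Σ - η Σ_B` into `2 (DΣD - (η/2) 1)`, which is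
positive semidefinite because `η / 2 ≤ λ_min(DΣD)`. Congruence by the invertible `D` preserves
positive semidefiniteness.
-/

open Matrix

/-- The group-block-diagonal part of a matrix, w.r.t. a group assignment `g`. -/
def blockDiagPart {p m : ℕ} (g : Fin p → Fin m) (A : Matrix (Fin p) (Fin p) ℝ) :
    Matrix (Fin p) (Fin p) ℝ :=
  Matrix.of fun i j => if g i = g j then A i j else 0

open scoped ComplexOrder MatrixOrder in
theorem Matrix.IsHermitian.posSemidef_sub_smul_one_iff {n 𝕜 : Type*} [Fintype n] [DecidableEq n]
    [RCLike 𝕜] {A : Matrix n n 𝕜} (hA : A.IsHermitian) {c : ℝ} :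
    (A - c • 1).PosSemidef ↔ ∀ i, c ≤ hA.eigenvalues i := by
  rw [← le_iff, ← Algebra.algebraMap_eq_smul_one, algebraMap_le_iff_le_spectrum hA.isSelfAdjoint,
    hA.spectrum_real_eq_range_eigenvalues, Set.forall_mem_range]

theorem group_knockoff_psd_general {p m : ℕ}
    (g : Fin p → Fin m)
    (Sig D : Matrix (Fin p) (Fin p) ℝ)
    (hD : D.PosDef)
    (hDsqrt : D * blockDiagPart g Sig * D = 1)
    (hDSD : (D * Sig * D).PosDef)
    (η : ℝ) (hη : η = min (2 * ⨅ i, hDSD.1.eigenvalues i) 1) :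
    ((2 : ℝ) • Sig - η • blockDiagPart g Sig).PosSemidef := by
  have hη_le : ∀ i, η / 2 ≤ hDSD.1.eigenvalues i := fun i => by
    have := ciInf_le (Set.finite_range hDSD.1.eigenvalues).bddBelow i
    linarith [hη ▸ min_le_left (2 * ⨅ i, hDSD.1.eigenvalues i) 1]
  have hconj : D * ((2 : ℝ) • Sig - η • blockDiagPart g Sig) * D
      = (2 : ℝ) • (D * Sig * D - (η / 2) • 1) := by
    simp only [mul_sub, sub_mul, Matrix.mul_smul, Matrix.smul_mul, hDsqrt, smul_sub, smul_smul]
    rw [mul_div_cancel₀ η two_ne_zero]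
  have hpsd : (star D * ((2 : ℝ) • Sig - η • blockDiagPart g Sig) * D).PosSemidef := by
    rw [star_eq_conjTranspose, hD.1.eq, hconj]
    exact (hDSD.1.posSemidef_sub_smul_one_iff.mpr hη_le).smul zero_le_two
  exact hD.isUnit.posSemidef_star_left_conjugate_iff.mp hpsd

/-- group-knockoff construction of Dai–Barber.  Let `Σ` be symmetric
positive definite, `D` the block-diagonal matrix of inverse symmetric square roots of
the diagonal blocks of `Σ` (characterized by: `D` positive definite, group-block-diagonal,
and `D * Σ_B * D = 1` where `Σ_B` is the block-diagonal part of `Σ`), and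
`η = min (2 λ_min(D Σ D)) 1`.  Then `S = η • Σ_B` satisfies `S ⪯ 2Σ`. -/
theorem group_knockoff_psd {p m : ℕ} [NeZero p]
    (g : Fin p → Fin m)
    (Sig D : Matrix (Fin p) (Fin p) ℝ)
    (hSig : Sig.PosDef)
    (hD : D.PosDef)
    (hDblock : ∀ i j, g i ≠ g j → D i j = 0)
    (hDsqrt : D * blockDiagPart g Sig * D = 1)
    (hDSD : (D * Sig * D).PosDef)
    (η : ℝ) (hη : η = min (2 * ⨅ i, hDSD.1.eigenvalues i) 1) :
    ((2 : ℝ) • Sig - η • blockDiagPart g Sig).PosSemidef :=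
  group_knockoff_psd_general g Sig D hD hDsqrt hDSD η hη
end

section
/- Let Σ ∈ ℝ^{p×p} be symmetric positive definite partitioned into m diagonal blocks, D the block-diagonal matrix of inverse square roots of the diagonal blocks, and η ∈ (0, 2λ_min(DΣD)). Then the block-diagonal matrix S with blocks η·Σ_{G_iG_i} satisfies S ≺ 2Σ (2Σ − S is positive definite). -/
open Matrix Unitary
open scoped ComplexOrder

theorem Matrix.IsHermitian.posDef_sub_smul_one_iff {n 𝕜 : Type*} [Fintype n] [DecidableEq n]
    [RCLike 𝕜] {A : Matrix n n 𝕜} (hA : A.IsHermitian) (c : ℝ) :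
    (A - c • (1 : Matrix n n 𝕜)).PosDef ↔ ∀ i, c < hA.eigenvalues i := by
  have hdiag : A - c • (1 : Matrix n n 𝕜) = conjStarAlgAut 𝕜 _ hA.eigenvectorUnitary
      (diagonal (RCLike.ofReal ∘ fun i => hA.eigenvalues i - c)) := by
    conv_lhs => rw [hA.spectral_theorem, RCLike.real_smul_eq_coe_smul (K := 𝕜),
      ← map_one (conjStarAlgAut 𝕜 _ hA.eigenvectorUnitary), ← map_smul, ← map_sub]
    congr 1
    ext i j
    rcases eq_or_ne i j with rfl | h
    · simp [Algebra.algebraMap_eq_smul_one, sub_smul]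
    · simp [h]
  simp [hdiag, conjStarAlgAut_apply, isUnit_coe.posDef_star_right_conjugate_iff]

theorem group_knockoff_posdef_general {p m : ℕ}
    (g : Fin p → Fin m)
    (Sig D : Matrix (Fin p) (Fin p) ℝ)
    (hD : D.PosDef)
    (hDsqrt : D * blockDiagPart g Sig * D = 1)
    (hDSD : (D * Sig * D).PosDef)
    (η : ℝ) (hη : η < 2 * ⨅ i, hDSD.1.eigenvalues i) :
    ((2 : ℝ) • Sig - η • blockDiagPart g Sig).PosDef := by
  have hconj : star D * ((2 : ℝ) • Sig - η • blockDiagPart g Sig) * D =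
      (2 : ℝ) • (D * Sig * D - (η / 2) • 1) := by
    rw [star_eq_conjTranspose, hD.1.eq, Matrix.mul_sub, Matrix.sub_mul, Matrix.mul_smul,
      Matrix.smul_mul, Matrix.mul_smul, Matrix.smul_mul, hDsqrt, smul_sub, smul_smul]
    ring_nf
  have hshift : (D * Sig * D - (η / 2) • 1).PosDef :=
    (hDSD.1.posDef_sub_smul_one_iff _).2 fun i => by
      have hmin := ciInf_le (Finite.bddBelow_range hDSD.1.eigenvalues) i
      linarith
  rw [← hD.isUnit.posDef_star_left_conjugate_iff, hconj]
  exact hshift.smul two_pos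

/-- group-knockoff construction with strict inequality.  With notation as in
Statement 4, if `0 < η < 2 λ_min(D Σ D)` then `S = η • Σ_B` satisfies `S ≺ 2Σ`. -/
theorem group_knockoff_posdef {p m : ℕ} [NeZero p]
    (g : Fin p → Fin m)
    (Sig D : Matrix (Fin p) (Fin p) ℝ)
    (hSig : Sig.PosDef)
    (hD : D.PosDef)
    (hDblock : ∀ i j, g i ≠ g j → D i j = 0)
    (hDsqrt : D * blockDiagPart g Sig * D = 1)
    (hDSD : (D * Sig * D).PosDef)
    (η : ℝ) (hη0 : 0 < η) (hη : η < 2 * ⨅ i, hDSD.1.eigenvalues i) :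
    ((2 : ℝ) • Sig - η • blockDiagPart g Sig).PosDef :=
  group_knockoff_posdef_general g Sig D hD hDsqrt hDSD η hη
end

section
/- Let (X, X̃) be a 2p-dimensional mean-zero Gaussian vector with covariance [[Σ, Σ−S],[Σ−S, Σ]], where Σ is positive definite and S is block-diagonal with respect to a partition G_1,...,G_m of {1,...,p}. Then for any subset 𝒮 ⊆ {1,...,m}, the vector obtained from (X, X̃) by swapping the coordinates X_{G_j} and X̃_{G_j} for each j ∈ 𝒮 has the same distribution as (X, X̃). -/
/-!
A linear image `A Z` of a standard Gaussian vector is the centred Gaussian with covariance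
`A Aᵀ`. Swapping coordinates of `A Z` permutes the rows of `A`, so the swapped vector is again
of this form, with the covariance matrix conjugated by the swap. Since `S` vanishes off the
group-diagonal blocks, `Σ` and `Σ - S` agree wherever a group swap moves an entry of the
covariance between a diagonal and an off-diagonal block, so the covariance is unchanged.
-/

open Matrix MeasureTheory ProbabilityTheory

/-- The standard Gaussian measure on `ι → ℝ`. -/
noncomputable def stdGaussianPi (ι : Type*) [Fintype ι] : Measure (ι → ℝ) :=
  Measure.pi fun _ => gaussianReal 0 1

/-- The group-swap map on coordinates `Fin p ⊕ Fin p`: for groups `j ∈ 𝒮`, the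
coordinates of group `G_j` in the first block are exchanged with those in the second. -/
def groupSwap {p m : ℕ} (g : Fin p → Fin m) (𝒮 : Finset (Fin m)) :
    (Fin p ⊕ Fin p) → (Fin p ⊕ Fin p) :=
  fun c => match c with
    | Sum.inl i => if g i ∈ 𝒮 then Sum.inr i else Sum.inl i
    | Sum.inr i => if g i ∈ 𝒮 then Sum.inl i else Sum.inr i

open WithLp

section

variable {ι : Type*} [Fintype ι]

lemma stdGaussianPi_eq_map_ofLp :
    stdGaussianPi ι = (stdGaussian (EuclideanSpace ℝ ι)).map ofLp := by
  rw [← map_pi_eq_stdGaussian, Measure.map_map (by fun_prop) (by fun_prop)]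
  exact (Measure.map_id).symm

variable [DecidableEq ι]

lemma map_toEuclideanCLM_stdGaussian (M : Matrix ι ι ℝ) :
    (stdGaussian (EuclideanSpace ℝ ι)).map (toEuclideanCLM (𝕜 := ℝ) M) =
      multivariateGaussian 0 (M * Mᵀ) := by
  apply IsGaussian.ext
  · simp [ContinuousLinearMap.integral_id_map IsGaussian.integrable_id]
  ext x y
  rw [covarianceBilin_map IsGaussian.memLp_two_id, covarianceBilin_stdGaussian,
    ← conjTranspose_eq_transpose_of_trivial,
    covarianceBilin_multivariateGaussian (posSemidef_self_mul_conjTranspose M),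
    innerSL_apply_apply, ContinuousLinearMap.adjoint_inner_left, ← ContinuousLinearMap.comp_apply,
    ← ContinuousLinearMap.star_eq_adjoint, ← map_star, ← ContinuousLinearMap.mul_def, ← map_mul,
    inner_toEuclideanCLM, star_eq_conjTranspose]

lemma map_mulVec_stdGaussianPi (M : Matrix ι ι ℝ) :
    (stdGaussianPi ι).map M.mulVec = (multivariateGaussian 0 (M * Mᵀ)).map ofLp := by
  rw [stdGaussianPi_eq_map_ofLp, ← map_toEuclideanCLM_stdGaussian,
    Measure.map_map (by fun_prop) (by fun_prop), Measure.map_map (by fun_prop) (by fun_prop)]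
  rfl

end

lemma fromBlocks_submatrix_groupSwap {α : Type*} {p m : ℕ} (g : Fin p → Fin m)
    (𝒮 : Finset (Fin m)) (P Q : Matrix (Fin p) (Fin p) α)
    (hPQ : ∀ i j, g i ≠ g j → P i j = Q i j) :
    (fromBlocks P Q Q P).submatrix (groupSwap g 𝒮) (groupSwap g 𝒮) = fromBlocks P Q Q P := by
  ext (i | i) (j | j) <;> by_cases hi : g i ∈ 𝒮 <;> by_cases hj : g j ∈ 𝒮 <;>
    simp only [submatrix_apply, groupSwap, hi, hj, if_true, if_false, fromBlocks_apply₁₁,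
      fromBlocks_apply₁₂, fromBlocks_apply₂₁, fromBlocks_apply₂₂] <;> grind

theorem group_knockoff_exchangeable_general {p m : ℕ}
    (g : Fin p → Fin m)
    (Sig S : Matrix (Fin p) (Fin p) ℝ)
    (hSblock : ∀ i j, g i ≠ g j → S i j = 0)
    (A : Matrix (Fin p ⊕ Fin p) (Fin p ⊕ Fin p) ℝ)
    (hA : A * Aᵀ = Matrix.fromBlocks Sig (Sig - S) (Sig - S) Sig)
    (μ : Measure ((Fin p ⊕ Fin p) → ℝ))
    (hμ : μ = Measure.map A.mulVec (stdGaussianPi (Fin p ⊕ Fin p)))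
    (𝒮 : Finset (Fin m)) :
    Measure.map (fun x => x ∘ groupSwap g 𝒮) μ = μ := by
  set B := A.submatrix (groupSwap g 𝒮) id
  have hswap : (fun x => x ∘ groupSwap g 𝒮) ∘ A.mulVec = B.mulVec := rfl
  have hcov : B * Bᵀ = A * Aᵀ := by
    rw [transpose_submatrix, ← submatrix_mul _ _ _ _ _ Function.bijective_id, hA]
    exact fromBlocks_submatrix_groupSwap g 𝒮 _ _ fun i j hij => by simp [hSblock i j hij]
  subst hμ
  rw [Measure.map_map (by fun_prop) (by fun_prop), hswap, map_mulVec_stdGaussianPi,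
    map_mulVec_stdGaussianPi, hcov]

/-- group-swap exchangeability of group knockoffs.  If `(X, X̃)` is a
mean-zero Gaussian vector with covariance `G = [[Σ, Σ−S],[Σ−S, Σ]]` (realized as the
pushforward of a standard Gaussian by any `A` with `A Aᵀ = G`), `Σ` is positive definite
and `S` is symmetric and group-block-diagonal, then swapping the groups in `𝒮` leaves the
distribution unchanged, for every `𝒮 ⊆ {1,…,m}`. -/
theorem group_knockoff_exchangeable {p m : ℕ}
    (g : Fin p → Fin m)
    (Sig S : Matrix (Fin p) (Fin p) ℝ)
    (hSig : Sig.PosDef) (hS : S.IsHermitian)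
    (hSblock : ∀ i j, g i ≠ g j → S i j = 0)
    (A : Matrix (Fin p ⊕ Fin p) (Fin p ⊕ Fin p) ℝ)
    (hA : A * Aᵀ = Matrix.fromBlocks Sig (Sig - S) (Sig - S) Sig)
    (μ : Measure ((Fin p ⊕ Fin p) → ℝ))
    (hμ : μ = Measure.map A.mulVec (stdGaussianPi (Fin p ⊕ Fin p)))
    (𝒮 : Finset (Fin m)) :
    Measure.map (fun x => x ∘ groupSwap g 𝒮) μ = μ :=
  group_knockoff_exchangeable_general g Sig S hSblock A hA μ hμ 𝒮
end

section
/- Let i.i.d. signs ε_1,...,ε_n be uniform on {−1,+1} and let V(t) = #{j ≤ n : ε_j = +1} and V'(t) = #{j ≤ n : ε_j = −1}. Then for any n ≥ 0, E[ V / (1 + V') ] ≤ 1, where V + V' = n. -/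
open MeasureTheory ProbabilityTheory
open scoped Classical

/-!
Group the sign vectors by their number `k` of plus signs. Since
`k * choose n k = (n - k + 1) * choose n (k - 1)`, the sum of `k / (1 + (n - k))` over all `2 ^ n`
sign vectors is `∑ k < n, choose n k = 2 ^ n - 1`, so the expectation is `1 - 2⁻¹ ^ n`.
-/

open Finset

theorem sum_choose_mul_div_one_add_sub_le (n : ℕ) :
    ∑ k ∈ range (n + 1), n.choose k • ((k : ℝ) / (1 + (n - k : ℕ))) ≤ 2 ^ n := by
  have shift : ∀ k ∈ range n,
      n.choose (k + 1) • (((k + 1 : ℕ) : ℝ) / (1 + (n - (k + 1) : ℕ))) = n.choose k := by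
    intro k hk
    have hkn : k < n := mem_range.mp hk
    have hden : (1 : ℝ) + (n - (k + 1) : ℕ) = (n - k : ℕ) := by
      rw [Nat.sub_succ', Nat.cast_pred (by omega)]; ring
    have hpos : (0 : ℝ) < (n - k : ℕ) := by exact_mod_cast Nat.sub_pos_of_lt hkn
    rw [hden, nsmul_eq_mul, ← mul_div_assoc, div_eq_iff hpos.ne']
    exact_mod_cast Nat.choose_succ_right_eq n k
  rw [sum_range_succ', sum_congr rfl shift]
  calc ∑ k ∈ range n, (n.choose k : ℝ) + n.choose 0 • (((0 : ℕ) : ℝ) / (1 + (n - 0 : ℕ)))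
      = ∑ k ∈ range n, (n.choose k : ℝ) := by simp
    _ ≤ ∑ k ∈ range (n + 1), (n.choose k : ℝ) :=
        sum_le_sum_of_subset_of_nonneg (range_subset_range.mpr n.le_succ) fun _ _ _ => by positivity
    _ = 2 ^ n := by exact_mod_cast Nat.sum_range_choose n

section Combinatorics

variable {ι : Type*} [Fintype ι]

theorem sum_card_div_one_add_card_compl_le [DecidableEq ι] :
    ∑ S : Finset ι, (#S : ℝ) / (1 + #Sᶜ) ≤ 2 ^ Fintype.card ι := by
  simp only [card_compl]
  rw [← powerset_univ,
    sum_powerset_apply_card (fun k => (k : ℝ) / (1 + (Fintype.card ι - k : ℕ))), card_univ]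
  exact sum_choose_mul_div_one_add_sub_le _

theorem Fintype.sum_bool_fun_eq_sum_finset [DecidableEq ι] {M : Type*} [AddCommMonoid M]
    (f : Finset ι → M) :
    ∑ s : ι → Bool, f {j | s j} = ∑ S : Finset ι, f S :=
  Fintype.sum_equiv
    { toFun := fun s => ({j | s j} : Finset ι)
      invFun := fun S j => decide (j ∈ S)
      left_inv := fun s => by ext j; simp
      right_inv := fun S => by ext j; simp } _ _ fun _ => rfl

noncomputable def signRatio (s : ι → Bool) : ℝ := #{j | s j} / (1 + #{j | s j = false})

theorem sum_signRatio_le [DecidableEq ι] :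
    ∑ s : ι → Bool, signRatio s ≤ 2 ^ Fintype.card ι :=
  calc ∑ s : ι → Bool, signRatio s
      = ∑ s : ι → Bool, (#{j | s j} : ℝ) / (1 + #(univ.filter fun j => s j)ᶜ) :=
        sum_congr rfl fun s _ => by rw [signRatio, compl_filter]; simp
    _ = ∑ S : Finset ι, (#S : ℝ) / (1 + #Sᶜ) :=
        Fintype.sum_bool_fun_eq_sum_finset fun S => (#S : ℝ) / (1 + #Sᶜ)
    _ ≤ 2 ^ Fintype.card ι := sum_card_div_one_add_card_compl_le

theorem div_one_add_le_signRatio (x : ι → ℝ) :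
    (#{j | x j = 1} : ℝ) / (1 + #{j | x j = -1}) ≤ signRatio fun j => decide (x j ≠ -1) := by
  have hnum :
      univ.filter (fun j => x j = 1) ⊆ univ.filter fun j => decide (x j ≠ -1) = true := by
    intro j; simp only [mem_filter, mem_univ, true_and]; intro h; rw [h]; norm_num
  have hden :
      univ.filter (fun j => decide (x j ≠ -1) = false) = univ.filter fun j => x j = -1 := by
    ext j; simp
  rw [signRatio, hden]
  gcongr

end Combinatorics

section FairCoins

variable {ι : Type*} [Fintype ι] {Ω : Type*} [MeasurableSpace Ω] {μ : Measure Ω}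
  [IsProbabilityMeasure μ]

theorem integrable_comp_pi_bool (b : ι → Ω → Bool) (hb : ∀ j, Measurable (b j))
    (F : (ι → Bool) → ℝ) :
    Integrable (fun ω => F (fun j => b j ω)) μ :=
  (Integrable.of_finite (μ := μ.map fun ω j => b j ω)).comp_measurable
    (measurable_pi_lambda _ hb)

theorem integral_comp_of_iIndepFun_fair_coins [DecidableEq ι] (b : ι → Ω → Bool)
    (hb : ∀ j, Measurable (b j)) (hindep : iIndepFun b μ)
    (hlaw : ∀ j, μ.map (b j)
      = (2 : ENNReal)⁻¹ • Measure.dirac true + (2 : ENNReal)⁻¹ • Measure.dirac false)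
    (F : (ι → Bool) → ℝ) :
    ∫ ω, F (fun j => b j ω) ∂μ = (2 : ℝ)⁻¹ ^ Fintype.card ι * ∑ s, F s := by
  have hvec : Measurable fun ω j => b j ω := measurable_pi_lambda _ hb
  rw [← integral_map hvec.aemeasurable (Measurable.of_discrete).aestronglyMeasurable,
    (iIndepFun_iff_map_fun_eq_pi_map fun j => (hb j).aemeasurable).mp hindep,
    integral_fintype .of_finite, mul_sum]
  refine sum_congr rfl fun s _ => ?_
  have hpoint : ∀ j, (μ.map (b j)) {s j} = 2⁻¹ := fun j => by
    rw [hlaw j]; cases s j <;> simp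
  simp [measureReal_def, Measure.pi_singleton, hpoint, ENNReal.toReal_pow]

end FairCoins

/-- for i.i.d. signs `ε_1,…,ε_n` uniform on `{−1,+1}`, letting
`V = #{j : ε_j = +1}` and `V' = #{j : ε_j = −1}` (so `V + V' = n`), we have
`E[V / (1 + V')] ≤ 1`. -/
theorem signs_ratio_expectation_le_one {Ω : Type*} [MeasurableSpace Ω]
    (μ : Measure Ω) [IsProbabilityMeasure μ] {n : ℕ}
    (ε : Fin n → Ω → ℝ) (hmeas : ∀ j, Measurable (ε j))
    (hindep : iIndepFun ε μ)
    (hunif : ∀ j, Measure.map (ε j) μ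
      = (2 : ENNReal)⁻¹ • Measure.dirac (1 : ℝ) + (2 : ENNReal)⁻¹ • Measure.dirac (-1 : ℝ)) :
    ∫ ω, ((Finset.univ.filter fun j => ε j ω = 1).card : ℝ)
        / (1 + ((Finset.univ.filter fun j => ε j ω = -1).card : ℝ)) ∂μ ≤ 1 := by
  -- Reading the signs through `x ≠ -1` rather than `x = 1` bounds the integrand pointwise by
  -- `signRatio`, so the fact that the `ε j` are a.s. `±1` is never needed.
  let φ : ℝ → Bool := fun x => decide (x ≠ -1)
  have hφ : Measurable φ := measurable_to_bool <| by
    convert (measurableSet_singleton (-1 : ℝ)).compl using 1; ext; simp [φ]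
  have hlaw : ∀ j, μ.map (φ ∘ ε j)
      = (2 : ENNReal)⁻¹ • Measure.dirac true + (2 : ENNReal)⁻¹ • Measure.dirac false := by
    intro j
    rw [← Measure.map_map hφ (hmeas j), hunif j, Measure.map_add _ _ hφ, Measure.map_smul,
      Measure.map_smul, Measure.map_dirac' hφ, Measure.map_dirac' hφ]
    norm_num [φ]
  calc _ ≤ ∫ ω, signRatio (fun j => φ (ε j ω)) ∂μ :=
        integral_mono_of_nonneg (ae_of_all _ fun _ => by positivity)
          (integrable_comp_pi_bool (fun j ω => φ (ε j ω)) (fun j => hφ.comp (hmeas j)) _)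
          (ae_of_all _ fun ω => div_one_add_le_signRatio fun j => ε j ω)
    _ = (2 : ℝ)⁻¹ ^ n * ∑ s, signRatio s := by
        rw [integral_comp_of_iIndepFun_fair_coins (fun j ω => φ (ε j ω))
          (fun j => hφ.comp (hmeas j)) (hindep.comp _ fun _ => hφ) hlaw, Fintype.card_fin]
    _ ≤ (2 : ℝ)⁻¹ ^ n * 2 ^ n := by
        gcongr; simpa using sum_signRatio_le (ι := Fin n)
    _ = 1 := by rw [← mul_pow]; norm_num
end

section
/- For every integer n ≥ 0 and V ~ Binomial(n, 1/2), E[ V/(1+n−V) ] ≤ 1. -/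
/-- for `V ~ Binomial(n, 1/2)`,
`E[V/(1+n−V)] = ∑_{k=0}^n C(n,k) 2^{-n} · k/(1+n−k) ≤ 1`, for all `n ≥ 0`. -/
theorem binomial_ratio_expectation_le_one (n : ℕ) :
    ∑ k ∈ Finset.range (n + 1),
      (n.choose k : ℝ) * (2 : ℝ)⁻¹ ^ n * ((k : ℝ) / (1 + (n : ℝ) - (k : ℝ))) ≤ 1 := by
  rw [Finset.sum_range_succ']
  have hterm : ∀ i ∈ Finset.range n,
      (n.choose (i + 1) : ℝ) * (2 : ℝ)⁻¹ ^ n * (((i + 1 : ℕ) : ℝ) / (1 + (n : ℝ) - ((i + 1 : ℕ) : ℝ)))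
        = (2 : ℝ)⁻¹ ^ n * (n.choose i : ℝ) := by
    intro i hi
    rw [Finset.mem_range] at hi
    have hpos : (0 : ℝ) < 1 + (n : ℝ) - ((i + 1 : ℕ) : ℝ) := by
      push_cast
      have : (i : ℝ) < n := by exact_mod_cast hi
      linarith
    have hdenom : 1 + (n : ℝ) - ((i + 1 : ℕ) : ℝ) = ((n - i : ℕ) : ℝ) := by
      have := Nat.cast_sub (le_of_lt hi) (R := ℝ)
      push_cast [this]
      ring
    have hid : (n.choose (i + 1) : ℝ) * ((i + 1 : ℕ) : ℝ) = (n.choose i : ℝ) * ((n - i : ℕ) : ℝ) := by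
      exact_mod_cast congrArg (Nat.cast (R := ℝ)) (Nat.choose_succ_right_eq n i)
    have hne : ((n - i : ℕ) : ℝ) ≠ 0 := by rw [← hdenom]; exact ne_of_gt hpos
    rw [hdenom]
    have : (n.choose (i + 1) : ℝ) * (2 : ℝ)⁻¹ ^ n * (((i + 1 : ℕ) : ℝ) / ((n - i : ℕ) : ℝ))
        = (2 : ℝ)⁻¹ ^ n * ((n.choose (i + 1) : ℝ) * ((i + 1 : ℕ) : ℝ) / ((n - i : ℕ) : ℝ)) := by
      ring
    rw [this, hid, mul_div_cancel_right₀ _ hne]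
  rw [Finset.sum_congr rfl hterm]
  rw [← Finset.mul_sum]
  have hsum : ∑ i ∈ Finset.range n, (n.choose i : ℝ) = 2 ^ n - 1 := by
    have h := Nat.sum_range_choose n
    have h2 : ∑ i ∈ Finset.range (n + 1), (n.choose i : ℝ) = 2 ^ n := by
      exact_mod_cast congrArg (Nat.cast (R := ℝ)) h
    rw [Finset.sum_range_succ, Nat.choose_self] at h2
    push_cast at h2
    linarith
  rw [hsum]
  have h2n : (0 : ℝ) < (2 : ℝ) ^ n := by positivity
  have : (2 : ℝ)⁻¹ ^ n = ((2 : ℝ) ^ n)⁻¹ := by rw [inv_pow]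
  rw [this]
  simp only [Nat.cast_zero, zero_div, mul_zero, add_zero]
  rw [mul_sub, inv_mul_cancel₀ (ne_of_gt h2n)]
  have : (0:ℝ) ≤ ((2 : ℝ) ^ n)⁻¹ * 1 := by positivity
  linarith
end

section
/- Let Σ = (1−ρ)I_p + (ρ−γρ)B + γρJ_p where B is block diagonal with m blocks each equal to the k×k all-ones matrix (p = mk) and J_p is the p×p all-ones matrix. Then the eigenvalues of Σ are exactly: 1−ρ (with multiplicity m(k−1)), 1+(k−1)ρ−γρk (with multiplicity m−1), and 1+(k−1)ρ+γρk(m−1) (with multiplicity 1). -/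
/-!
Write `Σ = (1 - ρ) I + V ∘ (fst × fst)`, where `V = (ρ - γρ) I_m + γρ J_m` is the block-level
matrix, inflated to `p = mk` coordinates by repeating each entry on a `k × k` block. Such an
inflation factors as `U V Uᵀ` with `U : p × m` and `Uᵀ U = k I_m`, so by `charpoly (AB) =
X^(p-m) charpoly (BA)` the spectrum of `Σ` is `1 - ρ` (multiplicity `p - m`) together with the
spectrum of `(1 - ρ) I + kV`. The same argument for the rank-one `J_m = 1 1ᵀ`, with `1ᵀ 1 = m`,
gives the spectrum of `kV`.
-/

open Matrix Polynomial

namespace Polynomial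

theorem X_sub_C_comp_X_sub_C {R : Type*} [CommRing R] (a b : R) :
    (X - C b).comp (X - C a) = X - C (a + b) := by
  simp [sub_sub]

end Polynomial

namespace Matrix

variable {R : Type*} [CommRing R] {m n : Type*} [Fintype m] [DecidableEq m]
  [Fintype n] [DecidableEq n]

theorem charpoly_scalar_add (a : R) (M : Matrix n n R) :
    (scalar n a + M).charpoly = M.charpoly.comp (X - C a) := by
  simpa [sub_eq_add_neg, add_comm] using charpoly_sub_scalar M (-a)

theorem charpoly_scalar_add_mul_of_le (a : R) (U : Matrix n m R) (W : Matrix m n R)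
    (h : Fintype.card m ≤ Fintype.card n) :
    (scalar n a + U * W).charpoly
      = (X - C a) ^ (Fintype.card n - Fintype.card m) * (W * U).charpoly.comp (X - C a) := by
  rw [charpoly_scalar_add, charpoly_mul_comm_of_le _ _ h, mul_comp, X_pow_comp]

theorem charpoly_scalar_add_vecMulVec [Nonempty n] (a : R) (u v : n → R) :
    (scalar n a + vecMulVec u v).charpoly
      = (X - C a) ^ (Fintype.card n - 1) * (X - C (a + u ⬝ᵥ v)) := by
  have h : Fintype.card Unit ≤ Fintype.card n := Fintype.card_pos
  rw [vecMulVec_eq (ι := Unit), charpoly_scalar_add_mul_of_le _ _ _ h,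
    replicateRow_mul_replicateCol]
  simp [charpoly, charmatrix, sub_sub, dotProduct_comm]

theorem submatrix_fst_eq_mul (V : Matrix m m R) (κ : Type*) [Fintype κ] :
    V.submatrix (Prod.fst : m × κ → m) (Prod.fst : m × κ → m)
      = (1 : Matrix m m R).submatrix (Prod.fst : m × κ → m) id * V
        * (1 : Matrix m m R).submatrix id (Prod.fst : m × κ → m) := by
  refine Matrix.ext fun p q => ?_
  simp [mul_apply, one_apply]

theorem one_submatrix_id_fst_mul_one_submatrix_fst_id (κ : Type*) [Fintype κ] :
    (1 : Matrix m m R).submatrix id (Prod.fst : m × κ → m)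
        * (1 : Matrix m m R).submatrix (Prod.fst : m × κ → m) id
      = (Fintype.card κ : R) • (1 : Matrix m m R) := by
  refine Matrix.ext fun i j => ?_
  by_cases hij : i = j <;> simp [mul_apply, one_apply, Fintype.sum_prod_type, hij]

theorem charpoly_scalar_add_submatrix_fst {κ : Type*} [Fintype κ] [DecidableEq κ] [Nonempty κ]
    (a : R) (V : Matrix m m R) :
    (scalar (m × κ) a + V.submatrix Prod.fst Prod.fst).charpoly
      = (X - C a) ^ (Fintype.card m * (Fintype.card κ - 1))
        * ((Fintype.card κ : R) • V).charpoly.comp (X - C a) := by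
  have hcard : Fintype.card m ≤ Fintype.card (m × κ) := by
    simpa [Fintype.card_prod] using Nat.le_mul_of_pos_right _ Fintype.card_pos
  rw [submatrix_fst_eq_mul, Matrix.mul_assoc, charpoly_scalar_add_mul_of_le _ _ _ hcard,
    Matrix.mul_assoc, one_submatrix_id_fst_mul_one_submatrix_fst_id κ, Fintype.card_prod,
    Nat.mul_sub_one, Matrix.mul_smul, Matrix.mul_one]

end Matrix

/-- spectrum of the equicorrelated-blocks covariance matrix
`Σ = (1−ρ)I + (ρ−γρ)B + γρJ` on `p = mk` coordinates: its characteristic polynomial is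
`(X − (1−ρ))^{m(k−1)} · (X − (1+(k−1)ρ−γρk))^{m−1} · (X − (1+(k−1)ρ+γρk(m−1)))`,
i.e. the eigenvalues are `1−ρ` with multiplicity `m(k−1)`, `1+(k−1)ρ−γρk` with
multiplicity `m−1`, and `1+(k−1)ρ+γρk(m−1)` with multiplicity `1`. -/
theorem simulation_covariance_charpoly (m k : ℕ) (hm : 0 < m) (hk : 0 < k)
    (ρ γ : ℝ)
    (B J : Matrix (Fin m × Fin k) (Fin m × Fin k) ℝ)
    (hB : ∀ a b : Fin m × Fin k, B a b = if a.1 = b.1 then 1 else 0)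
    (hJ : ∀ a b : Fin m × Fin k, J a b = 1)
    (Sig : Matrix (Fin m × Fin k) (Fin m × Fin k) ℝ)
    (hSig : Sig = (1 - ρ) • (1 : Matrix (Fin m × Fin k) (Fin m × Fin k) ℝ)
        + (ρ - γ * ρ) • B + (γ * ρ) • J) :
    Sig.charpoly
      = (X - C (1 - ρ)) ^ (m * (k - 1))
        * (X - C (1 + ((k : ℝ) - 1) * ρ - γ * ρ * (k : ℝ))) ^ (m - 1)
        * (X - C (1 + ((k : ℝ) - 1) * ρ + γ * ρ * (k : ℝ) * ((m : ℝ) - 1))) := by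
  have : NeZero m := ⟨hm.ne'⟩
  have : NeZero k := ⟨hk.ne'⟩
  set V : Matrix (Fin m) (Fin m) ℝ := scalar (Fin m) (ρ - γ * ρ) + vecMulVec (fun _ => γ * ρ) 1
  have hSigV : Sig = scalar _ (1 - ρ) + V.submatrix Prod.fst Prod.fst := by
    subst hSig
    refine Matrix.ext fun a b => ?_
    by_cases hab : a = b
    · subst hab
      simp [V, hB, hJ]
    · by_cases hab₁ : a.1 = b.1 <;> simp [V, hB, hJ, hab, hab₁, one_apply]
  have hkV : (k : ℝ) • V
      = scalar (Fin m) (k * (ρ - γ * ρ)) + vecMulVec (fun _ => k * (γ * ρ)) 1 := by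
    refine Matrix.ext fun i j => ?_
    by_cases hij : i = j
    · simp [V, hij]
      ring
    · simp [V, hij]
  have hmid : 1 - ρ + k * (ρ - γ * ρ) = 1 + ((k : ℝ) - 1) * ρ - γ * ρ * k := by ring
  have htop : 1 - ρ + (k * (ρ - γ * ρ) + (fun _ => k * (γ * ρ)) ⬝ᵥ (1 : Fin m → ℝ))
      = 1 + ((k : ℝ) - 1) * ρ + γ * ρ * k * ((m : ℝ) - 1) := by
    simp [dotProduct]
    ring
  rw [hSigV, charpoly_scalar_add_submatrix_fst, Fintype.card_fin, Fintype.card_fin, hkV,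
    charpoly_scalar_add_vecMulVec, mul_comp, pow_comp, X_sub_C_comp_X_sub_C,
    X_sub_C_comp_X_sub_C, Fintype.card_fin, hmid, htop, ← mul_assoc]
end
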